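/- For every integer L ≥ 2 and every ε with 0 < ε < 1, the μ-measure of the set of configurations φ for which every one of the 2L² bonds is ε-ordered is at most ε^{L² − 1}. -/

import Mathlib

open MeasureTheory Real

/-- The site space: the discrete torus of side `L`. -/
abbrev Torus (L : ℕ) := ZMod L × ZMod L

/-- A configuration of the toy model: one circle-valued spin per site. -/
abbrev Config (L : ℕ) := Torus L → AddCircle (1 : ℝ)

/-- The two unit coordinate vectors `e₁ = (1,0)` and `e₂ = (0,1)`. -/
def coordVec (L : ℕ) : Fin 2 → Torus L
  | 0 => (1, 0)
  | 1 => (0, 1)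

/-- The product of normalized Haar measures on the spins. -/
noncomputable def toyMeasure (L : ℕ) [NeZero L] : Measure (Config L) :=
  Measure.pi fun _ => (AddCircle.haarAddCircle : Measure (AddCircle (1 : ℝ)))

/-- A bond `(x, x + eᵢ)` of the configuration `φ` is `ε`-ordered when
`‖φ x - φ (x + eᵢ)‖ ≤ ε/2`, where `‖·‖` is the quotient norm on `ℝ/ℤ`. -/
def IsOrderedBond (L : ℕ) [NeZero L] (ε : ℝ) (φ : Config L) (x : Torus L) (i : Fin 2) : Prop :=
  ‖φ x - φ (x + coordVec L i)‖ ≤ ε / 2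

noncomputable instance (L : ℕ) [NeZero L] (ε : ℝ) (φ : Config L) (x : Torus L) (i : Fin 2) :
    Decidable (IsOrderedBond L ε φ x i) :=
  Real.decidableLE _ _

/-- The toy Hamiltonian: minus the number of `ε`-ordered bonds. -/
noncomputable def toyH (L : ℕ) [NeZero L] (ε : ℝ) (φ : Config L) : ℝ :=
  -(∑ x : Torus L, ∑ i : Fin 2, if IsOrderedBond L ε φ x i then (1 : ℝ) else 0)

/-- The toy-model partition function. -/
noncomputable def toyZ (L : ℕ) [NeZero L] (β ε : ℝ) : ℝ :=
  ∫ φ, Real.exp (-β * toyH L ε φ) ∂(toyMeasure L)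

/-! Walk through the torus along a Hamiltonian path `x₀, …, x_{L²-1}` whose consecutive sites
are bonded. A fully `ε`-ordered configuration has all its increments `φ x_{k+1} - φ x_k` in the
closed ball of radius `ε/2`, of Haar measure at most `ε`. Passing to the coordinates
`(φ x₀, φ x₁ - φ x₀, …)` preserves the product Haar measure, because a continuous surjective
endomorphism of a compact group maps Haar probability measure to a Haar probability measure, hence
to itself; in these coordinates the set is contained in a box of measure `ε^{L²-1}`. -/

section Increments

variable (G : Type*) [AddCommGroup G] (n : ℕ)

def increments : (Fin (n + 1) → G) →+ (Fin (n + 1) → G) :=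
  AddMonoidHom.mk' (fun ψ => Fin.cons (ψ 0) fun i : Fin n => ψ i.succ - ψ i.castSucc)
    fun ψ χ => funext fun j => by
      cases j using Fin.cases
      · simp
      · simp only [Fin.cons_succ, Pi.add_apply]
        abel

variable {G n}

@[simp]
lemma increments_zero (ψ : Fin (n + 1) → G) : increments G n ψ 0 = ψ 0 := rfl

@[simp]
lemma increments_succ (ψ : Fin (n + 1) → G) (i : Fin n) :
    increments G n ψ i.succ = ψ i.succ - ψ i.castSucc := rfl

lemma increments_surjective : Function.Surjective (increments G n) := by
  intro δ
  refine ⟨fun j => δ 0 + Fin.partialSum (Fin.tail δ) j, funext fun j => ?_⟩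
  cases j using Fin.cases
  · simp
  · simp only [increments_succ, add_sub_add_left_eq_sub, Fin.partialSum_succ, add_sub_cancel_left,
      Fin.tail]

lemma continuous_increments [TopologicalSpace G] [IsTopologicalAddGroup G] :
    Continuous (increments G n) := by
  refine continuous_pi fun j => ?_
  cases j using Fin.cases
  · exact continuous_apply 0
  · exact (continuous_apply _).sub (continuous_apply _)

variable [TopologicalSpace G] [IsTopologicalAddGroup G] [LocallyCompactSpace G]
  [SecondCountableTopology G] [MeasurableSpace G] [BorelSpace G]
  (μ : Measure G) [μ.IsAddHaarMeasure] [IsProbabilityMeasure μ]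

lemma measurePreserving_increments :
    MeasurePreserving (increments G n) (Measure.pi fun _ => μ) (Measure.pi fun _ => μ) := by
  refine ⟨continuous_increments.measurable, ?_⟩
  have := Measure.isAddHaarMeasure_map_of_isFiniteMeasure (Measure.pi fun _ => μ)
    (increments G n) continuous_increments increments_surjective
  have := Measure.isProbabilityMeasure_map (μ := Measure.pi fun _ : Fin (n + 1) => μ)
    continuous_increments.aemeasurable
  exact Measure.isAddHaarMeasure_eq_of_isProbabilityMeasure _ _

lemma pi_setOf_increments_mem {S : Set G} (hS : MeasurableSet S) :
    Measure.pi (fun _ => μ) {ψ : Fin (n + 1) → G | ∀ i : Fin n, ψ i.succ - ψ i.castSucc ∈ S} =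
      μ S ^ n := by
  have hpre : {ψ : Fin (n + 1) → G | ∀ i : Fin n, ψ i.succ - ψ i.castSucc ∈ S} =
      increments G n ⁻¹' Set.univ.pi (Fin.cons Set.univ fun _ => S) := by
    ext ψ
    simp [Fin.forall_fin_succ]
  rw [hpre, (measurePreserving_increments μ).measure_preimage
      (MeasurableSet.univ_pi fun j => ?_).nullMeasurableSet, Measure.pi_pi, Fin.prod_univ_succ]
  · simp
  · cases j using Fin.cases
    exacts [MeasurableSet.univ, hS]

lemma pi_setOf_sub_mem_along {ι : Type*} [Fintype ι] (p : Fin (n + 1) ≃ ι)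
    {S : Set G} (hS : MeasurableSet S) :
    Measure.pi (fun _ : ι => μ) {φ | ∀ i : Fin n, φ (p i.succ) - φ (p i.castSucc) ∈ S} =
      μ S ^ n := by
  rw [← (measurePreserving_piCongrLeft (fun _ => μ) p).measure_preimage_equiv,
    ← pi_setOf_increments_mem μ hS]
  congr 1
  ext ψ
  simp only [Set.mem_preimage, Set.mem_ofPred_eq, MeasurableEquiv.piCongrLeft_apply_apply]

end Increments

lemma AddCircle.haarAddCircle_closedBall_le (x : AddCircle (1 : ℝ)) (r : ℝ) :
    AddCircle.haarAddCircle (Metric.closedBall x r) ≤ ENNReal.ofReal (2 * r) := by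
  have hvol : (volume : Measure (AddCircle (1 : ℝ))) = AddCircle.haarAddCircle := by
    simp [AddCircle.volume_eq_smul_haarAddCircle]
  rw [← hvol, AddCircle.volume_closedBall]
  exact ENNReal.ofReal_le_ofReal (min_le_right _ _)

/-- `m = qL + c` goes to `(c - q, q)`: row `q` is traversed along `e₁` and ends one `e₂`-step
before the start of row `q + 1`. -/
def torusHelix (L m : ℕ) : Torus L :=
  ((m : ZMod L) - (m / L : ℕ), (m / L : ℕ))

lemma torusHelix_succ (L m : ℕ) : ∃ k, torusHelix L (m + 1) = torusHelix L m + coordVec L k := by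
  by_cases hL : L ∣ m + 1
  · refine ⟨1, ?_⟩
    simp only [torusHelix, coordVec, Nat.succ_div, if_pos hL, Prod.mk_add_mk]
    push_cast
    ring_nf
  · refine ⟨0, ?_⟩
    simp only [torusHelix, coordVec, Nat.succ_div, if_neg hL, Prod.mk_add_mk]
    push_cast
    ring_nf

lemma torusHelix_injOn (L : ℕ) : Set.InjOn (torusHelix L) (Set.Iio (L ^ 2)) := by
  have hdiv : ∀ c ∈ Set.Iio (L ^ 2), c / L < L := fun c hc => Nat.div_lt_of_lt_mul (by rwa [← sq])
  intro a ha b hb hab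
  simp only [torusHelix, Prod.mk.injEq] at hab
  obtain ⟨hfst, hsnd⟩ := hab
  rw [hsnd, sub_left_inj, ZMod.natCast_eq_natCast_iff'] at hfst
  rw [ZMod.natCast_eq_natCast_iff', Nat.mod_eq_of_lt (hdiv a ha), Nat.mod_eq_of_lt (hdiv b hb)]
    at hsnd
  rw [← Nat.div_add_mod a L, ← Nat.div_add_mod b L, hsnd, hfst]

noncomputable def torusHelixEquiv (L : ℕ) [NeZero L] : Fin (L ^ 2) ≃ Torus L :=
  Equiv.ofBijective (fun m => torusHelix L m) <|
    (Fintype.bijective_iff_injective_and_card _).2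
      ⟨fun a b hab => Fin.ext (torusHelix_injOn L a.isLt b.isLt hab), by simp [ZMod.card, sq]⟩

/-- the set of fully `ε`-ordered configurations has measure
at most `ε^{L² − 1}`. -/
theorem toy_ordered_measure_upper_bound (L : ℕ) (hL : 2 ≤ L) (ε : ℝ)
    (hε : 0 < ε) :
    haveI : NeZero L := ⟨by omega⟩
    toyMeasure L {φ : Config L | ∀ x : Torus L, ∀ i : Fin 2, IsOrderedBond L ε φ x i} ≤
      ENNReal.ofReal (ε ^ (L ^ 2 - 1)) := by
  have : NeZero L := ⟨by omega⟩
  obtain ⟨n, hn⟩ : ∃ n, L ^ 2 = n + 1 := ⟨L ^ 2 - 1, (Nat.succ_pred_eq_of_pos (by positivity)).symm⟩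
  let p : Fin (n + 1) ≃ Torus L := (finCongr hn.symm).trans (torusHelixEquiv L)
  have hp (i : Fin n) : ∃ k, p i.succ = p i.castSucc + coordVec L k := torusHelix_succ L i
  calc toyMeasure L {φ | ∀ x i, IsOrderedBond L ε φ x i}
      ≤ toyMeasure L {φ | ∀ i : Fin n, φ (p i.succ) - φ (p i.castSucc) ∈
          Metric.closedBall 0 (ε / 2)} := by
        refine measure_mono fun φ hφ i => ?_
        obtain ⟨k, hk⟩ := hp i
        simpa [hk, norm_sub_rev, IsOrderedBond] using hφ (p i.castSucc) k
    _ = AddCircle.haarAddCircle (Metric.closedBall (0 : AddCircle (1 : ℝ)) (ε / 2)) ^ n :=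
        pi_setOf_sub_mem_along _ p measurableSet_closedBall
    _ ≤ ENNReal.ofReal ε ^ n := by
        gcongr
        simpa [mul_div_cancel₀] using AddCircle.haarAddCircle_closedBall_le 0 (ε / 2)
    _ = ENNReal.ofReal (ε ^ (L ^ 2 - 1)) := by rw [hn, Nat.add_sub_cancel, ENNReal.ofReal_pow hε.le]
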